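/- Let M be an admissible matroid on J. Then every flat of M is either admissible or totally inadmissible. -/

import Mathlib

open Set Matroid
open scoped Matroid

open scoped Classical

/-- The ground set `J = [n] ⊔ [n]*`: `Sum.inl` is `[n]`, `Sum.inr` is `[n]*`. -/
abbrev J (n : ℕ) := Fin n ⊕ Fin n

/-- The fixed-point-free involution `a ↦ a*` on `J n`. -/
def sstar {n : ℕ} (a : J n) : J n := Sum.swap a

/-- `A* = {a* : a ∈ A}`. -/
def starSet {n : ℕ} (A : Set (J n)) : Set (J n) := sstar '' A

/-- `A` is admissible if `A ∩ A* = ∅`. -/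
def Admissible {n : ℕ} (A : Set (J n)) : Prop := A ∩ starSet A = ∅

/-- `A` is totally inadmissible if `A* = A`. -/
def TotallyInadmissible {n : ℕ} (A : Set (J n)) : Prop := starSet A = A

/-- The rank of a set in a matroid (on a finite ground type). -/
noncomputable def Matroid.rSet {α : Type*} (M : Matroid α) (A : Set α) : ℕ :=
  sSup {k : ℕ | ∃ I, M.Indep I ∧ I ⊆ A ∧ I.ncard = k}

/-- The rank of a matroid. -/
noncomputable def Matroid.rnk {α : Type*} (M : Matroid α) : ℕ := M.rSet M.E

/-- A loopless matroid: every singleton of the ground set is independent. -/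
def Matroid.LooplessM {α : Type*} (M : Matroid α) : Prop := ∀ a ∈ M.E, M.Indep {a}

/-- `I^ad M`: the independent sets of `M` whose closure is admissible. -/
def Iad {n : ℕ} (M : Matroid (J n)) : Set (Set (J n)) :=
  {I | M.Indep I ∧ Admissible (M.closure I)}

/-- An admissible matroid on `J n`. -/
def IsAdmissibleMatroid {n : ℕ} (M : Matroid (J n)) : Prop :=
  M.E = Set.univ ∧ M.LooplessM ∧
    ∀ A : Set (J n),
      M.rSet A = sSup {v : ℕ | ∃ I : Set (J n), M.Indep I ∧ Admissible I ∧ I ⊆ A ∧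
        v = if ∃ a, a ∈ A ∧ sstar a ∈ A ∧ (I ∪ {a}) ∈ Iad M ∧ (I ∪ {sstar a}) ∈ Iad M
            then I.ncard + 2 else I.ncard}

/-- Strongly admissible sets with respect to `M`. -/
inductive StronglyAdmissible {n : ℕ} (M : Matroid (J n)) : Set (J n) → Prop
  | empty : StronglyAdmissible M ∅
  | insert {B : Set (J n)} {a : J n} : StronglyAdmissible M B →
      a ∉ M.closure B → sstar a ∉ M.closure B → StronglyAdmissible M (Insert.insert a B)

/-- The Möbius function of a finite poset, valued in `ℤ`. -/
noncomputable def mob {α : Type*} [PartialOrder α] [Fintype α] (x y : α) : ℤ :=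
  letI : DecidableEq α := Classical.decEq α
  letI : @DecidableRel α α (· < ·) := Classical.decRel _
  letI : @DecidableRel α α (· ≤ ·) := Classical.decRel _
  letI := Fintype.toLocallyFiniteOrder (α := α)
  IncidenceAlgebra.mu ℤ x y

/-- The lattice of flats of the ranked symplectic matroid associated to `M`:
admissible flats of `M` together with the ground set as top element. -/
abbrev LS {n : ℕ} (M : Matroid (J n)) :=
  {F : Set (J n) // (M.IsFlat F ∧ Admissible F) ∨ F = M.E}

/-- The Möbius number `μ(S(M))` of the lattice of flats of the ranked symplectic matroid. -/
noncomputable def muS {n : ℕ} (M : Matroid (J n)) : ℤ :=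
  if h : M.IsFlat ∅ ∧ Admissible (∅ : Set (J n)) then
    mob (⟨∅, Or.inl h⟩ : LS M) ⟨M.E, Or.inr rfl⟩
  else 0

/-- The Möbius function of the lattice of flats of `M`. -/
noncomputable def muFlats {n : ℕ} (M : Matroid (J n)) (F G : Set (J n)) : ℤ :=
  if h : M.IsFlat F ∧ M.IsFlat G then
    mob (⟨F, h.1⟩ : {X : Set (J n) // M.IsFlat X}) ⟨G, h.2⟩
  else 0

/-- Matroid deletion. -/
def Matroid.del {α : Type*} (M : Matroid α) (D : Set α) : Matroid α := M ↾ (M.E \ D)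

/-- Matroid contraction, via the dual. -/
def Matroid.con {α : Type*} (M : Matroid α) (C : Set α) : Matroid α := (M✶ ↾ (M✶.E \ C))✶

/-- A circuit: a minimal dependent subset of the ground set. -/
def Matroid.Circuit' {α : Type*} (M : Matroid α) (C : Set α) : Prop :=
  C ⊆ M.E ∧ ¬ M.Indep C ∧ ∀ D, D ⊂ C → M.Indep D

/-- Connectedness of a matroid: nonempty ground set and any two elements lie
in a common circuit. -/
def Matroid.ConnectedM {α : Type*} (M : Matroid α) : Prop :=
  M.E.Nonempty ∧ ∀ a ∈ M.E, ∀ b ∈ M.E, a = b ∨ ∃ C, M.Circuit' C ∧ a ∈ C ∧ b ∈ C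

/-- The 0/1-indicator vector of `B ⊆ J` in `ℝ^J`. -/
noncomputable def indic {n : ℕ} (B : Set (J n)) : J n → ℝ := fun a => if a ∈ B then 1 else 0

/-- The enveloping map `env : ℝ^J → ℝ^n`, `(env x)_i = x_i - x_{i*}`. -/
def envMap {n : ℕ} (x : J n → ℝ) : Fin n → ℝ := fun i => x (Sum.inl i) - x (Sum.inr i)

/-- `e±_A ∈ ℝ^n`: `+1` on coordinates `i ∈ A`, `-1` on coordinates with `i* ∈ A`, `0` otherwise. -/
noncomputable def epm {n : ℕ} (A : Set (J n)) : Fin n → ℝ := envMap (indic A)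

/-- The matroid polytope `P(S(M))` of the ranked symplectic matroid of `M`. -/
noncomputable def PolyS {n : ℕ} (M : Matroid (J n)) : Set (Fin n → ℝ) :=
  convexHull ℝ (epm '' {B | M.IsBase B ∧ Admissible B})

/-- The support of the Bergman fan of the ranked symplectic matroid of `M`. -/
def Berg {n : ℕ} (M : Matroid (J n)) : Set (Fin n → ℝ) :=
  {ω | ∃ C : Finset (Set (J n)),
    (∀ F ∈ C, M.IsFlat F ∧ Admissible F ∧ F ≠ ∅) ∧
    (∀ F ∈ C, ∀ G ∈ C, F ⊆ G ∨ G ⊆ F) ∧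
    ∃ a : Set (J n) → ℝ, (∀ F, 0 ≤ a F) ∧ ω = ∑ F ∈ C, a F • epm F}

/-- A maximal chain `F₁ ⊊ ⋯ ⊊ F_d` of proper flats of the lattice of flats of `S(M)`,
where `rank_M (F i) = i + 1`. -/
def IsFlagChain {n : ℕ} (M : Matroid (J n)) (d : ℕ) (F : Fin d → Set (J n)) : Prop :=
  (∀ i, M.IsFlat (F i) ∧ Admissible (F i) ∧ M.rSet (F i) = (i : ℕ) + 1) ∧
    ∀ i j : Fin d, i < j → F i ⊂ F j

/-- A Minkowski weight of dimension `d` on the Bergman fan of `S(M)`. -/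
def IsMinkowskiWeight {n : ℕ} (M : Matroid (J n)) (d : ℕ)
    (c : (Fin d → Set (J n)) → ℤ) : Prop :=
  ∀ (σ : Fin d → Set (J n)) (k : Fin d), IsFlagChain M d σ →
    (∑ G ∈ Finset.univ.filter
        (fun G : Set (J n) => IsFlagChain M d (Function.update σ k G)),
        (c (Function.update σ k G) : ℝ) • epm G)
      ∈ Submodule.span ℝ {v : Fin n → ℝ | ∃ i : Fin d, i ≠ k ∧ v = epm (σ i)}

/-- The top (rank `d`) flat of a maximal chain. -/
def chainTop {n d : ℕ} (σ : Fin d → Set (J n)) : Set (J n) := ⋃ i, σ i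

/-!
If a flat `F` contains a pair `a, a*` but some `b ∈ F` has `b* ∉ F`, extend a basis `B ∋ b` of `F`
to the independent, inadmissible set `A = B ∪ {b*}`. Reading the admissible rank formula at `A`
forces `A = I ⊔ {c, c*}` for an admissible `I`, with both `A \ {c}` and `A \ {c*}` of admissible
closure. Neither can be `B`, whose closure `F` is inadmissible, so both contain `b*`, and one of
them also contains `b`.
-/

section Involution

variable {n : ℕ}

lemma sstar_sstar (a : J n) : sstar (sstar a) = a := Sum.swap_swap a

lemma sstar_ne (a : J n) : sstar a ≠ a := by
  cases a <;> simp [sstar]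

lemma Admissible.mono {A B : Set (J n)} (hB : Admissible B) (hAB : A ⊆ B) : Admissible A :=
  subset_empty_iff.1 <| hB ▸ inter_subset_inter hAB (image_mono hAB)

lemma not_admissible_iff {A : Set (J n)} : ¬ Admissible A ↔ ∃ a ∈ A, sstar a ∈ A := by
  simp only [Admissible, ← nonempty_iff_ne_empty, starSet]
  constructor
  · rintro ⟨x, hx, y, hy, rfl⟩
    exact ⟨y, hy, hx⟩
  · rintro ⟨a, ha, has⟩
    exact ⟨sstar a, has, a, ha, rfl⟩

lemma Admissible.sstar_notMem {A : Set (J n)} (hA : Admissible A) {a : J n} (ha : a ∈ A) :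
    sstar a ∉ A := fun has => not_admissible_iff.2 ⟨a, ha, has⟩ hA

lemma totallyInadmissible_of_forall_sstar_mem {A : Set (J n)} (h : ∀ a ∈ A, sstar a ∈ A) :
    TotallyInadmissible A :=
  (image_subset_iff.2 h).antisymm fun a ha => ⟨sstar a, h a ha, sstar_sstar a⟩

end Involution

lemma Set.union_singleton_eq_diff_singleton {α : Type*} [Finite α] {I A : Set α} {x y : α}
    (hIA : I ⊆ A) (hx : x ∈ A) (hy : y ∈ A) (hxI : x ∉ I) (hyI : y ∉ I) (hxy : x ≠ y)
    (hcard : A.ncard = I.ncard + 2) : I ∪ {x} = A \ {y} := by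
  have hsub : I ∪ {x} ⊆ A \ {y} :=
    union_subset (fun z hz => ⟨hIA hz, fun hzy => hyI (hzy ▸ hz)⟩)
      (singleton_subset_iff.2 ⟨hx, hxy⟩)
  refine eq_of_subset_of_ncard_le hsub ?_ (toFinite _)
  rw [union_singleton, ncard_insert_of_notMem hxI, ncard_sdiff_singleton_of_mem hy]
  omega

lemma Matroid.Indep.rSet_eq_ncard {α : Type*} [Finite α] {M : Matroid α} {I : Set α}
    (hI : M.Indep I) : M.rSet I = I.ncard := by
  have hbdd : ∀ k ∈ {k : ℕ | ∃ J, M.Indep J ∧ J ⊆ I ∧ J.ncard = k}, k ≤ I.ncard := by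
    rintro k ⟨J, -, hJI, rfl⟩
    exact ncard_le_ncard hJI
  exact le_antisymm (csSup_le ⟨_, I, hI, subset_rfl, rfl⟩ hbdd)
    (le_csSup ⟨_, hbdd⟩ ⟨I, hI, subset_rfl, rfl⟩)

namespace IsAdmissibleMatroid

variable {n : ℕ} {M : Matroid (J n)}

lemma admissible_of_closure (hM : IsAdmissibleMatroid M) {X : Set (J n)}
    (hX : Admissible (M.closure X)) : Admissible X :=
  hX.mono (M.subset_closure X (hM.1 ▸ subset_univ X))

lemma exists_pair_of_indep_of_not_admissible (hM : IsAdmissibleMatroid M) {A : Set (J n)}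
    (hA : M.Indep A) (hnA : ¬ Admissible A) :
    ∃ c ∈ A, sstar c ∈ A ∧
      Admissible (M.closure (A \ {c})) ∧ Admissible (M.closure (A \ {sstar c})) := by
  have hrank := hM.2.2 A
  rw [hA.rSet_eq_ncard] at hrank
  have hbdd : BddAbove {v : ℕ | ∃ I : Set (J n), M.Indep I ∧ Admissible I ∧ I ⊆ A ∧
      v = if ∃ a, a ∈ A ∧ sstar a ∈ A ∧ (I ∪ {a}) ∈ Iad M ∧ (I ∪ {sstar a}) ∈ Iad M
          then I.ncard + 2 else I.ncard} := by
    refine ⟨A.ncard + 2, ?_⟩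
    rintro v ⟨I, -, -, hIA, rfl⟩
    have := ncard_le_ncard hIA
    split <;> omega
  have hmem := Nat.sSup_mem
    (by exact ⟨_, ∅, M.empty_indep, by simp [Admissible, starSet], empty_subset A, rfl⟩) hbdd
  obtain ⟨I, -, hI, hIA, hval⟩ := hrank ▸ hmem
  split_ifs at hval with hpair
  · obtain ⟨c, hcA, hcsA, ⟨-, hc⟩, ⟨-, hcs⟩⟩ := hpair
    have hc' := hM.admissible_of_closure hc
    have hcs' := hM.admissible_of_closure hcs
    have hcI : c ∉ I := fun h => hcs'.sstar_notMem (Or.inl h) (by simp)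
    have hcsI : sstar c ∉ I := fun h => hc'.sstar_notMem (by simp) (Or.inl h)
    refine ⟨c, hcA, hcsA, ?_, ?_⟩
    · rwa [← union_singleton_eq_diff_singleton hIA hcsA hcA hcsI hcI (sstar_ne c) hval]
    · rwa [← union_singleton_eq_diff_singleton hIA hcA hcsA hcI hcsI (sstar_ne c).symm hval]
  · exact absurd (eq_of_subset_of_ncard_le hIA hval.le (toFinite A) ▸ hI) hnA

lemma sstar_mem_of_isFlat (hM : IsAdmissibleMatroid M) {F : Set (J n)} (hF : M.IsFlat F)
    (hnF : ¬ Admissible F) {b : J n} (hb : b ∈ F) : sstar b ∈ F := by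
  by_contra hbs
  obtain ⟨B, hB, hbB⟩ := (hM.2.1 b (hM.1 ▸ mem_univ b)).subset_isBasis_of_subset
    (singleton_subset_iff.2 hb) hF.subset_ground
  have hBcl : M.closure B = F := by rw [hB.closure_eq_closure, hF.closure]
  have hbsB : sstar b ∉ B := fun h => hbs (hB.subset h)
  set A := insert (sstar b) B
  have hA : M.Indep A := (hB.indep.insert_indep_iff_of_notMem hbsB).2
    ⟨hM.1 ▸ mem_univ _, hBcl ▸ hbs⟩
  have hbA : b ∈ A := mem_insert_of_mem _ (hbB rfl)
  have hnA : ¬ Admissible A := not_admissible_iff.2 ⟨b, hbA, mem_insert _ _⟩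
  obtain ⟨c, -, -, hc, hcs⟩ := hM.exists_pair_of_indep_of_not_admissible hA hnA
  have hbsA : ∀ d, Admissible (M.closure (A \ {d})) → sstar b ∈ A \ {d} := by
    rintro d hd
    refine ⟨mem_insert _ _, fun hdb => hnF ?_⟩
    rwa [← mem_singleton_iff.1 hdb, insert_sdiff_self_of_notMem hbsB, hBcl] at hd
  have hbc : b ∈ A \ {c} ∨ b ∈ A \ {sstar c} := by
    by_cases hb : b = c
    · exact Or.inr ⟨hbA, hb ▸ (sstar_ne b).symm⟩
    · exact Or.inl ⟨hbA, hb⟩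
  rcases hbc with hbc | hbc
  · exact (hM.admissible_of_closure hc).sstar_notMem hbc (hbsA c hc)
  · exact (hM.admissible_of_closure hcs).sstar_notMem hbc (hbsA _ hcs)

end IsAdmissibleMatroid

theorem stmt_0_general (n : ℕ) (M : Matroid (J n)) (hM : IsAdmissibleMatroid M)
    (F : Set (J n)) (hF : M.IsFlat F) :
    Admissible F ∨ TotallyInadmissible F := by
  by_cases hadm : Admissible F
  · exact Or.inl hadm
  · exact Or.inr <| totallyInadmissible_of_forall_sstar_mem fun b hb =>
      hM.sstar_mem_of_isFlat hF hadm hb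

theorem stmt_0 (n : ℕ) (hn : 1 ≤ n) (M : Matroid (J n)) (hM : IsAdmissibleMatroid M)
    (F : Set (J n)) (hF : M.IsFlat F) :
    Admissible F ∨ TotallyInadmissible F :=
  stmt_0_general n M hM F hF
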